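/- arXiv:0909.1255 — 2 statements merged into one kernel-verified Lean document; each statement's English description precedes it below -/
import Mathlib

section
/- Let (M,d) be a cone metric space over a normal cone P with normal constant K, and let T,S : M → M with S a T-Zamfirescu mapping. Then for every x₀ ∈ M, lim_{n→∞} d(TSⁿx₀, TSⁿ⁺¹x₀) = 0 (convergence in the norm of E). -/
open Filter Topology

variable {E : Type*}

/-- A cone in a real Banach space. -/
def IsCone [NormedAddCommGroup E] [NormedSpace ℝ E] (P : Set E) : Prop :=
  IsClosed P ∧ P.Nonempty ∧ P ≠ {0} ∧
  (∀ (a b : ℝ), 0 ≤ a → 0 ≤ b → ∀ x ∈ P, ∀ y ∈ P, a • x + b • y ∈ P) ∧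
  (∀ x, x ∈ P → -x ∈ P → x = 0)

/-- The partial order induced by the cone `P`: `x ≤ y` iff `y - x ∈ P`. -/
def coneLe [NormedAddCommGroup E] (P : Set E) (x y : E) : Prop := y - x ∈ P

/-- `x ≪ y` iff `y - x ∈ int P`. -/
def coneLt [NormedAddCommGroup E] (P : Set E) (x y : E) : Prop := y - x ∈ interior P

/-- A normal cone with normal constant `K`. -/
def IsNormalCone [NormedAddCommGroup E] (P : Set E) (K : ℝ) : Prop :=
  0 < K ∧ ∀ x y : E, coneLe P 0 x → coneLe P x y → ‖x‖ ≤ K * ‖y‖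

/-- A cone metric on `M` with values in `E`, relative to the cone `P`. -/
def IsConeMetric [NormedAddCommGroup E] {M : Type*} (P : Set E) (d : M → M → E) : Prop :=
  (∀ x y : M, coneLe P 0 (d x y)) ∧
  (∀ x y : M, d x y = 0 ↔ x = y) ∧
  (∀ x y : M, d x y = d y x) ∧
  (∀ x y z : M, coneLe P (d x y) (d x z + d z y))

/-- Convergence of a sequence in a cone metric space. -/
def ConeConverges [NormedAddCommGroup E] {M : Type*} (P : Set E) (d : M → M → E)
    (s : ℕ → M) (x : M) : Prop :=
  ∀ c : E, coneLt P 0 c → ∃ n₀ : ℕ, ∀ n > n₀, coneLt P (d (s n) x) c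

/-- Cauchy sequence in a cone metric space. -/
def ConeCauchy [NormedAddCommGroup E] {M : Type*} (P : Set E) (d : M → M → E)
    (s : ℕ → M) : Prop :=
  ∀ c : E, coneLt P 0 c → ∃ n₀ : ℕ, ∀ n ≥ n₀, ∀ m ≥ n₀, coneLt P (d (s n) (s m)) c

/-- Completeness of a cone metric space. -/
def ConeComplete [NormedAddCommGroup E] {M : Type*} (P : Set E) (d : M → M → E) : Prop :=
  ∀ s : ℕ → M, ConeCauchy P d s → ∃ x : M, ConeConverges P d s x

/-- Continuity of a self-map of a cone metric space. -/
def ConeContinuous [NormedAddCommGroup E] {M : Type*} (P : Set E) (d : M → M → E)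
    (T : M → M) : Prop :=
  ∀ (s : ℕ → M) (x : M), ConeConverges P d s x → ConeConverges P d (fun n => T (s n)) (T x)

/-- `T` is subsequentially convergent. -/
def SubseqConvergent [NormedAddCommGroup E] {M : Type*} (P : Set E) (d : M → M → E)
    (T : M → M) : Prop :=
  ∀ s : ℕ → M, (∃ y, ConeConverges P d (fun n => T (s n)) y) →
    ∃ φ : ℕ → ℕ, StrictMono φ ∧ ∃ z, ConeConverges P d (fun n => s (φ n)) z

/-- `T` is sequentially convergent. -/
def SeqConvergent [NormedAddCommGroup E] {M : Type*} (P : Set E) (d : M → M → E)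
    (T : M → M) : Prop :=
  ∀ s : ℕ → M, (∃ y, ConeConverges P d (fun n => T (s n)) y) →
    ∃ z, ConeConverges P d s z

/-- `S` is a `T`-Zamfirescu mapping. -/
def TZamfirescu [NormedAddCommGroup E] [NormedSpace ℝ E] {M : Type*} (P : Set E)
    (d : M → M → E) (T S : M → M) : Prop :=
  ∃ a b c : ℝ, 0 ≤ a ∧ a < 1 ∧ 0 ≤ b ∧ b < 1/2 ∧ 0 ≤ c ∧ c < 1/2 ∧
    ∀ x y : M,
      coneLe P (d (T (S x)) (T (S y))) (a • d (T x) (T y)) ∨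
      coneLe P (d (T (S x)) (T (S y))) (b • (d (T x) (T (S x)) + d (T y) (T (S y)))) ∨
      coneLe P (d (T (S x)) (T (S y))) (c • (d (T x) (T (S y)) + d (T y) (T (S x))))

/-- `S` is a `T`-weak contraction. -/
def TWeakContraction [NormedAddCommGroup E] [NormedSpace ℝ E] {M : Type*} (P : Set E)
    (d : M → M → E) (T S : M → M) : Prop :=
  ∃ δ L : ℝ, 0 < δ ∧ δ < 1 ∧ 0 ≤ L ∧
    ∀ x y : M, coneLe P (d (T (S x)) (T (S y))) (δ • d (T x) (T y) + L • d (T y) (T (S x)))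

/-!
Write `u = d(Tx, TSx)` and `v = d(TSx, TS²x)`. Applied to the pair `(x, S x)`, the second and
third Zamfirescu alternatives both give `v ≤ t • (u + v)` (with `t = b`, resp. `t = c` after the
triangle inequality `d(Tx, TS²x) ≤ u + v`), hence `v ≤ (t / (1 - t)) • u`. So in every case
`v ≤ δ • u` with `δ = max a (max (b/(1-b)) (c/(1-c))) < 1`. Along an orbit the consecutive
distances are then dominated by `δⁿ • d₀` in the cone order, and normality turns this into
`‖dₙ‖ ≤ K δⁿ ‖d₀‖ → 0`.
-/

namespace IsCone

variable [NormedAddCommGroup E] [NormedSpace ℝ E] {P : Set E}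

lemma add_smul_mem (hP : IsCone P) {a b : ℝ} (ha : 0 ≤ a) (hb : 0 ≤ b) {x y : E}
    (hx : x ∈ P) (hy : y ∈ P) : a • x + b • y ∈ P :=
  hP.2.2.2.1 a b ha hb x hx y hy

lemma zero_mem (hP : IsCone P) : (0 : E) ∈ P := by
  obtain ⟨x, hx⟩ := hP.2.1
  simpa using hP.add_smul_mem le_rfl le_rfl hx hx

lemma smul_mem (hP : IsCone P) {t : ℝ} (ht : 0 ≤ t) {x : E} (hx : x ∈ P) : t • x ∈ P := by
  simpa using hP.add_smul_mem ht le_rfl hx hx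

lemma add_mem (hP : IsCone P) {x y : E} (hx : x ∈ P) (hy : y ∈ P) : x + y ∈ P := by
  simpa using hP.add_smul_mem zero_le_one zero_le_one hx hy

lemma coneLe_refl (hP : IsCone P) (x : E) : coneLe P x x := by
  simpa [coneLe] using hP.zero_mem

lemma coneLe_trans (hP : IsCone P) {x y z : E} (hxy : coneLe P x y) (hyz : coneLe P y z) :
    coneLe P x z := by
  simpa [coneLe] using hP.add_mem hyz hxy

lemma coneLe_smul (hP : IsCone P) {t : ℝ} (ht : 0 ≤ t) {x y : E} (h : coneLe P x y) :
    coneLe P (t • x) (t • y) := by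
  simpa [coneLe, smul_sub] using hP.smul_mem ht h

lemma smul_coneLe_smul_of_le (hP : IsCone P) {s t : ℝ} (hst : s ≤ t) {x : E}
    (hx : coneLe P 0 x) : coneLe P (s • x) (t • x) := by
  simpa [coneLe, sub_smul] using hP.smul_mem (sub_nonneg.2 hst) (by simpa [coneLe] using hx)

lemma coneLe_div_smul_of_coneLe_smul_add (hP : IsCone P) {t : ℝ} (ht : t < 1) {u v : E}
    (h : coneLe P v (t • (u + v))) : coneLe P v ((t / (1 - t)) • u) := by
  have hpos : 0 < 1 - t := sub_pos.2 ht
  have key : (1 - t)⁻¹ • (t • (u + v) - v) = (t / (1 - t)) • u - v := by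
    match_scalars <;> field_simp; ring
  rw [coneLe, ← key]
  exact hP.smul_mem (inv_nonneg.2 hpos.le) h

lemma coneLe_pow_smul_of_coneLe_smul_succ (hP : IsCone P) {δ : ℝ} (hδ : 0 ≤ δ) {u : ℕ → E}
    (hu : ∀ n, coneLe P (u (n + 1)) (δ • u n)) (n : ℕ) : coneLe P (u n) (δ ^ n • u 0) := by
  induction n with
  | zero => simpa using hP.coneLe_refl (u 0)
  | succ n ih =>
    refine hP.coneLe_trans (hu n) ?_
    simpa [smul_smul, ← pow_succ'] using hP.coneLe_smul hδ ih

end IsCone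

lemma IsNormalCone.tendsto_zero_of_coneLe_pow_smul [NormedAddCommGroup E] [NormedSpace ℝ E]
    {P : Set E} {K δ : ℝ} (hK : IsNormalCone P K) (hδ₀ : 0 ≤ δ) (hδ₁ : δ < 1) {u : ℕ → E}
    (hu₀ : ∀ n, coneLe P 0 (u n)) (hu : ∀ n, coneLe P (u n) (δ ^ n • u 0)) :
    Tendsto u atTop (𝓝 0) := by
  have hnorm : ∀ n, ‖u n‖ ≤ K * ‖u 0‖ * δ ^ n := fun n => by
    calc ‖u n‖ ≤ K * ‖δ ^ n • u 0‖ := hK.2 _ _ (hu₀ n) (hu n)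
      _ = K * ‖u 0‖ * δ ^ n := by
        rw [norm_smul, Real.norm_of_nonneg (pow_nonneg hδ₀ n)]; ring
  rw [tendsto_zero_iff_norm_tendsto_zero]
  refine squeeze_zero (fun n => norm_nonneg _) hnorm ?_
  simpa using (tendsto_pow_atTop_nhds_zero_of_lt_one hδ₀ hδ₁).const_mul (K * ‖u 0‖)

lemma TZamfirescu.exists_coneLe_smul_dist [NormedAddCommGroup E] [NormedSpace ℝ E] {M : Type*}
    {P : Set E} {d : M → M → E} {T S : M → M} (hTZ : TZamfirescu P d T S) (hP : IsCone P)
    (hd : IsConeMetric P d) :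
    ∃ δ : ℝ, 0 ≤ δ ∧ δ < 1 ∧
      ∀ x, coneLe P (d (T (S x)) (T (S (S x)))) (δ • d (T x) (T (S x))) := by
  obtain ⟨a, b, c, ha₀, ha₁, -, hb₁, hc₀, hc₁, hZ⟩ := hTZ
  set δ := max a (max (b / (1 - b)) (c / (1 - c)))
  refine ⟨δ, le_max_of_le_left ha₀, max_lt ha₁ (max_lt ((div_lt_one (by linarith)).2 (by linarith))
    ((div_lt_one (by linarith)).2 (by linarith))), fun x => ?_⟩
  set u := d (T x) (T (S x))
  set v := d (T (S x)) (T (S (S x)))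
  have weaken : ∀ t ≤ δ, coneLe P v (t • u) → coneLe P v (δ • u) := fun t ht h =>
    hP.coneLe_trans h (hP.smul_coneLe_smul_of_le ht (hd.1 _ _))
  rcases hZ x (S x) with h | h | h
  · exact weaken a (le_max_left _ _) h
  · exact weaken _ (le_max_of_le_right (le_max_left _ _))
      (hP.coneLe_div_smul_of_coneLe_smul_add (by linarith) h)
  · have hvc : coneLe P v (c • (u + v)) := by
      refine hP.coneLe_trans h ?_
      rw [(hd.2.1 _ _).2 rfl, add_zero]
      exact hP.coneLe_smul hc₀ (hd.2.2.2 _ _ _)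
    exact weaken _ (le_max_of_le_right (le_max_right _ _))
      (hP.coneLe_div_smul_of_coneLe_smul_add (by linarith) hvc)

theorem tz_iterates_dist_tendsto_zero_general {E M : Type*} [NormedAddCommGroup E]
    [NormedSpace ℝ E] (P : Set E) (K : ℝ) (hP : IsCone P)
    (hK : IsNormalCone P K) (d : M → M → E) (hd : IsConeMetric P d)
    (T S : M → M) (hTZ : TZamfirescu P d T S) :
    ∀ x₀ : M,
      Filter.Tendsto (fun n : ℕ => d (T (S^[n] x₀)) (T (S^[n + 1] x₀)))
        Filter.atTop (nhds 0) := by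
  intro x₀
  obtain ⟨δ, hδ₀, hδ₁, hcontr⟩ := hTZ.exists_coneLe_smul_dist hP hd
  have hstep : ∀ n, coneLe P (d (T (S^[n + 1] x₀)) (T (S^[n + 2] x₀)))
      (δ • d (T (S^[n] x₀)) (T (S^[n + 1] x₀))) := fun n => by
    simpa only [Function.iterate_succ_apply'] using hcontr (S^[n] x₀)
  exact hK.tendsto_zero_of_coneLe_pow_smul hδ₀ hδ₁ (fun n => hd.1 _ _)
    (hP.coneLe_pow_smul_of_coneLe_smul_succ hδ₀ hstep)

theorem tz_iterates_dist_tendsto_zero {E M : Type*} [NormedAddCommGroup E]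
    [NormedSpace ℝ E] [CompleteSpace E] (P : Set E) (K : ℝ) (hP : IsCone P)
    (hK : IsNormalCone P K) (d : M → M → E) (hd : IsConeMetric P d)
    (T S : M → M) (hTZ : TZamfirescu P d T S) :
    ∀ x₀ : M,
      Filter.Tendsto (fun n : ℕ => d (T (S^[n] x₀)) (T (S^[n + 1] x₀)))
        Filter.atTop (nhds 0) :=
  tz_iterates_dist_tendsto_zero_general P K hP hK d hd T S hTZ
end

section
/- Let (M,d) be a complete cone metric space over a normal cone, T : M → M continuous and injective, and S : M → M a continuous T-weak contraction. Then for every x₀ ∈ M, lim_{n→∞} d(TSⁿx₀, TSⁿ⁺¹x₀) = 0, and the sequence (TSⁿx₀) converges to some y₀ ∈ M. -/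
open Filter Topology

variable {E : Type*}

/-! The weak-contraction inequality at `x = Sⁿx₀`, `y = Sⁿ⁺¹x₀` has vanishing `L`-term, so the
distances `uₙ = d(TSⁿx₀, TSⁿ⁺¹x₀)` satisfy `uₙ ≤ δⁿ u₀` in the cone order. Normality turns this
into `‖uₙ‖ ≤ K δⁿ ‖u₀‖ → 0`, and the polygon inequality bounds `d(TSⁿx₀, TSᵐx₀)` by
`δⁿ/(1-δ) • u₀` for `n ≤ m`, so the orbit is Cauchy and converges by completeness. -/

section Cone

variable [NormedAddCommGroup E] [NormedSpace ℝ E] {P : Set E}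

theorem IsCone.smul_mem_s10 (hP : IsCone P) {a : ℝ} (ha : 0 ≤ a) {x : E} (hx : x ∈ P) :
    a • x ∈ P := by
  simpa using hP.2.2.2.1 a 0 ha le_rfl x hx x hx

theorem IsCone.add_mem_s10 (hP : IsCone P) {x y : E} (hx : x ∈ P) (hy : y ∈ P) : x + y ∈ P := by
  simpa using hP.2.2.2.1 1 1 zero_le_one zero_le_one x hx y hy

theorem IsCone.zero_mem_s10 (hP : IsCone P) : (0 : E) ∈ P := by
  obtain ⟨p, hp⟩ := hP.2.1
  simpa using hP.smul_mem_s10 le_rfl hp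

theorem IsCone.coneLe_refl_s10 (hP : IsCone P) (x : E) : coneLe P x x := by
  simpa [coneLe] using hP.zero_mem_s10

theorem IsCone.coneLe_trans_s10 (hP : IsCone P) {x y z : E} (hxy : coneLe P x y)
    (hyz : coneLe P y z) : coneLe P x z := by
  simpa [coneLe] using hP.add_mem_s10 hyz hxy

theorem IsCone.coneLe_add (hP : IsCone P) {a b a' b' : E} (h : coneLe P a b)
    (h' : coneLe P a' b') : coneLe P (a + a') (b + b') := by
  unfold coneLe
  convert hP.add_mem_s10 h h' using 1
  abel

theorem IsCone.smul_coneLe_smul (hP : IsCone P) {a : ℝ} (ha : 0 ≤ a) {x y : E}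
    (h : coneLe P x y) : coneLe P (a • x) (a • y) := by
  unfold coneLe
  simpa [smul_sub] using hP.smul_mem_s10 ha h

theorem IsCone.smul_coneLe_smul_of_le_s10 (hP : IsCone P) {a b : ℝ} (hab : a ≤ b) {x : E}
    (hx : coneLe P 0 x) : coneLe P (a • x) (b • x) := by
  unfold coneLe
  simpa [sub_smul] using hP.smul_mem_s10 (sub_nonneg.mpr hab) (by simpa [coneLe] using hx)

end Cone

theorem IsNormalCone.tendsto_zero_of_coneLe [NormedAddCommGroup E] {P : Set E} {K : ℝ}
    (hK : IsNormalCone P K) {ι : Type*} {l : Filter ι} {u b : ι → E}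
    (h0 : ∀ i, coneLe P 0 (u i)) (hle : ∀ i, coneLe P (u i) (b i))
    (hb : Tendsto b l (𝓝 0)) : Tendsto u l (𝓝 0) := by
  rw [tendsto_zero_iff_norm_tendsto_zero] at hb ⊢
  simpa using squeeze_zero (fun i => norm_nonneg _) (fun i => hK.2 _ _ (h0 i) (hle i))
    (by simpa using hb.const_mul K)

theorem exists_forall_norm_lt_coneLt [NormedAddCommGroup E] {P : Set E} {c : E}
    (hc : coneLt P 0 c) : ∃ ε > 0, ∀ w : E, ‖w‖ < ε → coneLt P w c := by
  obtain ⟨ε, hε, hball⟩ := Metric.isOpen_iff.mp isOpen_interior c (by simpa [coneLt] using hc)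
  refine ⟨ε, hε, fun w hw => hball ?_⟩
  simpa [dist_eq_norm] using hw

section ConeMetric

variable [NormedAddCommGroup E] [NormedSpace ℝ E] {M : Type*} {P : Set E} {d : M → M → E}

theorem IsConeMetric.coneLe_sum_of_coneLe (hP : IsCone P) (hd : IsConeMetric P d)
    {v : ℕ → M} {b : ℕ → E} (hb : ∀ i, coneLe P (d (v i) (v (i + 1))) (b i)) (n k : ℕ) :
    coneLe P (d (v n) (v (n + k))) (∑ i ∈ Finset.Ico n (n + k), b i) := by
  induction k with
  | zero => simpa [(hd.2.1 _ _).mpr rfl] using hP.coneLe_refl_s10 0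
  | succ k ih =>
    rw [← add_assoc, Finset.sum_Ico_succ_top (Nat.le_add_right n k)]
    exact hP.coneLe_trans_s10 (hd.2.2.2 _ _ (v (n + k))) (hP.coneLe_add ih (hb (n + k)))

theorem IsConeMetric.coneLe_geom_smul (hP : IsCone P) (hd : IsConeMetric P d) {v : ℕ → M}
    {δ : ℝ} (hδ0 : 0 ≤ δ) (hδ1 : δ < 1) {a : E} (ha : coneLe P 0 a)
    (hv : ∀ i, coneLe P (d (v i) (v (i + 1))) (δ ^ i • a)) {n m : ℕ} (hnm : n ≤ m) :
    coneLe P (d (v n) (v m)) ((δ ^ n / (1 - δ)) • a) := by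
  obtain ⟨k, rfl⟩ := Nat.exists_eq_add_of_le hnm
  refine hP.coneLe_trans_s10 (hd.coneLe_sum_of_coneLe hP hv n k) ?_
  rw [← Finset.sum_smul]
  exact hP.smul_coneLe_smul_of_le_s10 (geom_sum_Ico_le_of_lt_one hδ0 hδ1) ha

end ConeMetric

theorem IsConeMetric.coneCauchy_of_coneLe [NormedAddCommGroup E] {M : Type*} {P : Set E}
    {d : M → M → E} {K : ℝ} (hK : IsNormalCone P K)
    (hd : IsConeMetric P d) {v : ℕ → M} {b : ℕ → E}
    (hle : ∀ n m, n ≤ m → coneLe P (d (v n) (v m)) (b n)) (hb : Tendsto b atTop (𝓝 0)) :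
    ConeCauchy P d v := by
  intro c hc
  obtain ⟨ε, hε, hsmall⟩ := exists_forall_norm_lt_coneLt hc
  obtain ⟨N, hN⟩ := (Metric.tendsto_atTop.mp hb) (ε / K) (div_pos hε hK.1)
  have hlt : ∀ n m, N ≤ n → n ≤ m → coneLt P (d (v n) (v m)) c := fun n m hn hnm =>
    hsmall _ <| calc
      ‖d (v n) (v m)‖ ≤ K * ‖b n‖ := hK.2 _ _ (hd.1 _ _) (hle n m hnm)
      _ < K * (ε / K) := mul_lt_mul_of_pos_left (by simpa using hN n hn) hK.1
      _ = ε := mul_div_cancel₀ ε hK.1.ne'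
  refine ⟨N, fun n hn m hm => ?_⟩
  rcases le_total n m with h | h
  · exact hlt n m hn h
  · simpa [hd.2.2.1 (v n)] using hlt m n hm h

theorem TWeakContraction.exists_coneLe_pow_smul [NormedAddCommGroup E] [NormedSpace ℝ E]
    {M : Type*} {P : Set E} {d : M → M → E} {T S : M → M} (hP : IsCone P)
    (hd : IsConeMetric P d) (hTS : TWeakContraction P d T S) :
    ∃ δ : ℝ, 0 ≤ δ ∧ δ < 1 ∧ ∀ x : M, ∀ n : ℕ,
      coneLe P (d (T (S^[n] x)) (T (S^[n + 1] x))) (δ ^ n • d (T x) (T (S x))) := by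
  obtain ⟨δ, L, hδ0, hδ1, -, hcon⟩ := hTS
  refine ⟨δ, hδ0.le, hδ1, fun x n => ?_⟩
  induction n with
  | zero => simpa using hP.coneLe_refl_s10 _
  | succ n ih =>
    have hstep := hcon (S^[n] x) (S^[n + 1] x)
    rw [← Function.iterate_succ_apply' S (n + 1), ← Function.iterate_succ_apply' S n,
      (hd.2.1 _ _).mpr rfl, smul_zero, add_zero] at hstep
    rw [pow_succ', ← smul_smul]
    exact hP.coneLe_trans_s10 hstep (hP.smul_coneLe_smul hδ0.le ih)

theorem tweak_iterates_general {E M : Type*} [NormedAddCommGroup E]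
    [NormedSpace ℝ E] (P : Set E) (K : ℝ) (hP : IsCone P)
    (hK : IsNormalCone P K) (d : M → M → E) (hd : IsConeMetric P d)
    (hcomp : ConeComplete P d) (T S : M → M)
    (hTW : TWeakContraction P d T S) :
    ∀ x₀ : M,
      Filter.Tendsto (fun n : ℕ => d (T (S^[n] x₀)) (T (S^[n + 1] x₀)))
        Filter.atTop (nhds 0) ∧
      ∃ y₀ : M, ConeConverges P d (fun n => T (S^[n] x₀)) y₀ := by
  intro x₀
  obtain ⟨δ, hδ0, hδ1, hgeom⟩ := hTW.exists_coneLe_pow_smul hP hd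
  set a := d (T x₀) (T (S x₀))
  have hpow : Tendsto (fun n : ℕ => δ ^ n) atTop (𝓝 0) :=
    tendsto_pow_atTop_nhds_zero_of_lt_one hδ0 hδ1
  refine ⟨hK.tendsto_zero_of_coneLe (fun n => hd.1 _ _) (hgeom x₀)
    (by simpa using hpow.smul_const a), hcomp _ ?_⟩
  refine hd.coneCauchy_of_coneLe hK
    (fun n m hnm => hd.coneLe_geom_smul hP hδ0 hδ1 (hd.1 _ _) (hgeom x₀) hnm) ?_
  simpa using (hpow.div_const (1 - δ)).smul_const a

theorem tweak_iterates {E M : Type*} [NormedAddCommGroup E]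
    [NormedSpace ℝ E] [CompleteSpace E] (P : Set E) (K : ℝ) (hP : IsCone P)
    (hK : IsNormalCone P K) (d : M → M → E) (hd : IsConeMetric P d)
    (hcomp : ConeComplete P d) (T S : M → M)
    (hTc : ConeContinuous P d T) (hTinj : Function.Injective T)
    (hSc : ConeContinuous P d S) (hTW : TWeakContraction P d T S) :
    ∀ x₀ : M,
      Filter.Tendsto (fun n : ℕ => d (T (S^[n] x₀)) (T (S^[n + 1] x₀)))
        Filter.atTop (nhds 0) ∧
      ∃ y₀ : M, ConeConverges P d (fun n => T (S^[n] x₀)) y₀ :=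
  tweak_iterates_general P K hP hK d hd hcomp T S hTW
end
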